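/- arXiv:math/0507088 — 2 statements merged into one kernel-verified Lean document; each statement's English description precedes it below -/
import Mathlib

section
/- Let u, a ∈ ℝⁿ with |u| ≥ m > 0 and |a| ≤ A. Then there exist constants C > 0 and σ₀ > 0, depending only on m and A, such that for all σ ∈ (0, σ₀): (|u| − σ·(a·u)/|u|)/|u − σa| ≥ 1 − (|a|²/(2m²))·σ² − C·σ³. -/
lemma le_of_sq_le_sq' (x y : ℝ) (h : x^2 ≤ y^2) (hx : 0 ≤ x) (hy : 0 ≤ y) : x ≤ y := by
  nlinarith

lemma pos_of_sq_pos (x : ℝ) (h : 0 < x^2) (hx : 0 ≤ x) : 0 < x := by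
  nlinarith

/-- Scalar polynomial inequality used in the main estimate. -/
lemma aux_poly (σ Q e E C : ℝ) (hσ0 : 0 < σ) (hσ1 : σ ≤ 1) (hQ : 0 ≤ Q)
    (hσQ : σ * Q ≤ 1/8) (he0 : 0 ≤ e) (heE : e ≤ E)
    (hC : C = 4*E^2 + 8*E*Q + 1) (hσC : C*σ ≤ E) :
    2*e*σ^2 ≤ (e*σ^2 + C*σ^3) * (2 - (e*σ^2 + C*σ^3)) * (1 - 2*(σ*Q)) := by
  have hE0 : 0 ≤ E := le_trans he0 heE
  have hC0 : 0 < C := by rw [hC]; positivity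
  set s : ℝ := e*σ^2 + C*σ^3 with hs
  have hs0 : 0 ≤ s := by positivity
  have hsle : s ≤ 2*E*σ^2 := by
    have h1 : e*σ^2 ≤ E*σ^2 := mul_le_mul_of_nonneg_right heE (sq_nonneg σ)
    have h2 : (C*σ)*σ^2 ≤ E*σ^2 := mul_le_mul_of_nonneg_right hσC (sq_nonneg σ)
    have h3 : C*σ^3 = (C*σ)*σ^2 := by ring
    linarith
  have key : s^2 + 4*(σ*Q)*s ≤ 2*C*σ^3 := by
    have h1 : s*s ≤ (2*E*σ^2)*(2*E*σ^2) := mul_self_le_mul_self hs0 hsle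
    have h4 : σ^4 ≤ σ^3 := pow_le_pow_of_le_one hσ0.le hσ1 (by norm_num)
    have h5 : 4*E^2*σ^4 ≤ 4*E^2*σ^3 :=
      mul_le_mul_of_nonneg_left h4 (by positivity)
    have h2 : 4*(σ*Q)*s ≤ 4*(σ*Q)*(2*E*σ^2) :=
      mul_le_mul_of_nonneg_left hsle (by positivity)
    have h6 : (0:ℝ) ≤ E^2*σ^3 := by positivity
    have h7 : (0:ℝ) ≤ E*Q*σ^3 := by positivity
    have h8 : (0:ℝ) ≤ σ^3 := by positivity
    subst hC
    linarith
  have hfinal : (0:ℝ) ≤ 2*(σ*Q)*s^2 := by positivity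
  linarith

set_option maxHeartbeats 1000000 in
theorem stmt_13
    (n : ℕ) (m A : ℝ) (hm : 0 < m) (hA : 0 < A) :
    ∃ C > (0:ℝ), ∃ σ₀ > (0:ℝ),
      ∀ u a : EuclideanSpace ℝ (Fin n), m ≤ ‖u‖ → ‖a‖ ≤ A →
        ∀ σ ∈ Set.Ioo (0:ℝ) σ₀,
          (‖u‖ - σ * (inner ℝ a u : ℝ) / ‖u‖) / ‖u - σ • a‖ ≥
            1 - (‖a‖ ^ 2 / (2 * m ^ 2)) * σ ^ 2 - C * σ ^ 3 := by
  set Q : ℝ := A/m with hQdef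
  have hQ0 : 0 < Q := by positivity
  set E : ℝ := A^2/(2*m^2) with hEdef
  have hE0 : 0 < E := by positivity
  set C : ℝ := 4*E^2 + 8*E*Q + 1 with hCdef
  have hC0 : 0 < C := by positivity
  refine ⟨C, hC0, min 1 (min (1/(8*Q)) (E/C)), by positivity, ?_⟩
  intro u a hmu haA σ hσ
  obtain ⟨hσ0, hσup⟩ := hσ
  have hσ1 : σ ≤ 1 := le_of_lt (lt_of_lt_of_le hσup (min_le_left _ _))
  have hσQ : σ * Q ≤ 1/8 := by
    have h := lt_of_lt_of_le hσup (le_trans (min_le_right _ _) (min_le_left _ _))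
    rw [lt_div_iff₀ (by positivity)] at h
    linarith
  have hσC : C * σ ≤ E := by
    have h := lt_of_lt_of_le hσup (le_trans (min_le_right _ _) (min_le_right _ _))
    rw [lt_div_iff₀ hC0] at h
    linarith
  set r : ℝ := ‖u‖ with hr
  set b : ℝ := ‖a‖ with hb
  set p : ℝ := (inner ℝ a u : ℝ) with hp
  have hr0 : 0 < r := lt_of_lt_of_le hm hmu
  have hb0 : 0 ≤ b := norm_nonneg a
  have hpcs : |p| ≤ b * r := abs_real_inner_le_norm a u
  have hD2 : ‖u - σ • a‖^2 = r^2 - 2*σ*p + σ^2*b^2 := by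
    rw [@norm_sub_sq_real, real_inner_smul_right, norm_smul, real_inner_comm,
      Real.norm_eq_abs, abs_of_pos hσ0]
    ring
  set D : ℝ := ‖u - σ • a‖ with hD
  have hD0 : 0 ≤ D := norm_nonneg _
  have hQm : A = Q * m := by rw [hQdef]; field_simp
  have hr2 : m^2 ≤ r^2 := by
    have := mul_self_le_mul_self hm.le hmu
    nlinarith [this]
  have hbQr : b ≤ Q * r :=
    le_trans haA (by rw [hQm]; exact mul_le_mul_of_nonneg_left hmu hQ0.le)
  have hbr : b * r ≤ Q * r^2 := by
    have := mul_le_mul_of_nonneg_right hbQr hr0.le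
    linarith [this]
  have hσp : σ * p ≤ σ * (Q * r^2) := by
    have h1 : p ≤ b * r := le_trans (le_abs_self p) hpcs
    have h2 : p ≤ Q * r^2 := le_trans h1 hbr
    exact mul_le_mul_of_nonneg_left h2 hσ0.le
  have hσQr : σ * (Q * r^2) ≤ (1/8) * r^2 := by
    have := mul_le_mul_of_nonneg_right hσQ (sq_nonneg r)
    linarith [this]
  have hrsq : 0 < r^2 := by positivity
  have hDpos : 0 < D := by
    have h2 : 0 < D^2 := by
      rw [hD2]
      have h3 : (0:ℝ) ≤ σ^2*b^2 := by positivity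
      linarith only [hσp, hσQr, h3, hrsq]
    exact pos_of_sq_pos D h2 hD0
  have hnum : r - σ*p/r = (r^2 - σ*p)/r := by field_simp
  set N : ℝ := r^2 - σ*p with hN
  have hNlb : r^2*(1-σ*Q) ≤ N := by rw [hN]; linarith only [hσp]
  have hNpos : 0 < N := by linarith only [hNlb, hσQr, hσp, hrsq]
  rw [ge_iff_le, hnum, div_div, le_div_iff₀ (by positivity)]
  set e : ℝ := b ^ 2 / (2 * m ^ 2) with he
  have he0 : 0 ≤ e := by positivity
  have hb2A2 : b^2 ≤ A^2 := by
    have := mul_self_le_mul_self hb0 haA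
    nlinarith [this]
  have heE : e ≤ E := by
    rw [he, hEdef]
    gcongr
  have hem : 2*e*m^2 = b^2 := by rw [he]; field_simp
  rcases le_or_gt (1 - e * σ ^ 2 - C * σ ^ 3) 0 with hR | hR
  · have h1 : (1 - e * σ ^ 2 - C * σ ^ 3) * (r*D) ≤ 0 :=
      mul_nonpos_of_nonpos_of_nonneg hR (by positivity)
    linarith
  · have key := aux_poly σ Q e E C hσ0 hσ1 hQ0.le hσQ he0 heE hCdef hσC
    set s : ℝ := e*σ^2 + C*σ^3 with hs
    have key' : 2*e*σ^2 ≤ s*(2-s)*(1-2*(σ*Q)) := key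
    have hs0 : 0 ≤ s := by positivity
    have hslt1 : s < 1 := by rw [hs]; linarith
    have hδ0 : 0 ≤ b^2*r^2 - p^2 := by
      have h1 := mul_self_le_mul_self (abs_nonneg p) hpcs
      have h2 : |p| * |p| = p^2 := by rw [← sq_abs p]; ring
      linarith only [h1, h2]
    have hX0 : 0 ≤ σ^2*(b^2*r^2 - p^2) := mul_nonneg (sq_nonneg σ) hδ0
    have hδ : σ^2*(b^2*r^2 - p^2) ≤ 2*e*σ^2*r^4 := by
      have ha : b^2*r^2 - p^2 ≤ b^2*r^2 := by linarith only [sq_nonneg p]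
      have hem' : b^2*r^2 = 2*e*(m^2*r^2) := by rw [← hem]; ring
      have hbb : 2*e*(m^2*r^2) ≤ 2*e*(r^2*r^2) :=
        mul_le_mul_of_nonneg_left (mul_le_mul_of_nonneg_right hr2 (sq_nonneg r))
          (by positivity)
      have hc : b^2*r^2 - p^2 ≤ 2*e*(r^2*r^2) := by linarith only [ha, hem', hbb]
      have hd := mul_le_mul_of_nonneg_left hc (sq_nonneg σ)
      linarith only [hd]
    have hN2 : r^4*(1-2*(σ*Q)) ≤ N^2 := by
      have hNlb0 : 0 ≤ r^2*(1-σ*Q) :=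
        mul_nonneg hrsq.le (by linarith : (0:ℝ) ≤ 1-σ*Q)
      have h := mul_le_mul hNlb hNlb hNlb0 hNpos.le
      linarith only [h, sq_nonneg (r^2*(σ*Q))]
    have hrD2 : (r*D)^2 = N^2 + σ^2*(b^2*r^2 - p^2) := by
      have h1 : (r*D)^2 = r^2 * D^2 := by ring
      rw [h1, hD2, hN]; ring
    have hss : 0 ≤ s*(2-s) := mul_nonneg hs0 (by linarith)
    have hchain1 : s*(2-s)*(r^4*(1-2*(σ*Q))) ≤ s*(2-s)*N^2 :=
      mul_le_mul_of_nonneg_left hN2 hss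
    have hchain2 : (2*e*σ^2)*r^4 ≤ (s*(2-s)*(1-2*(σ*Q)))*r^4 :=
      mul_le_mul_of_nonneg_right key' (by positivity)
    have hchain3 : (1-s)^2*(σ^2*(b^2*r^2-p^2)) ≤ σ^2*(b^2*r^2-p^2) := by
      linarith only [mul_nonneg hss hX0]
    have hstep : (1-s)^2*(σ^2*(b^2*r^2-p^2)) ≤ s*(2-s)*N^2 := by
      linarith only [hchain1, hchain2, hchain3, hδ]
    have hsq : ((1-s) * (r*D))^2 ≤ N^2 := by
      have hexp : ((1-s) * (r*D))^2 = (1-s)^2*(N^2 + σ^2*(b^2*r^2 - p^2)) := by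
        rw [show ((1-s)*(r*D))^2 = (1-s)^2*(r*D)^2 from by ring, hrD2]
      rw [hexp]
      linarith only [hstep]
    have hfin : (1-s) * (r*D) ≤ N := by
      have hRD0 : 0 ≤ (1-s) * (r*D) := by
        have h1 : 0 ≤ 1 - s := by linarith
        positivity
      exact le_of_sq_le_sq' _ _ hsq hRD0 hNpos.le
    calc (1 - e * σ ^ 2 - C * σ ^ 3) * (r*D) = (1-s)*(r*D) := by rw [hs]; ring
      _ ≤ N := hfin
end

section
/- Let λ > 1 and α ∈ (1/λ, 1), let c₁ > 0, 0 < r < R, and φ(ρ) = (ρ−R)²/(r−R)² on [r,R]. For σ ∈ (0,1) define E(σ) = 2(1−α)λrσ + 2(1−α)λσ∫_r^R φ dρ − 2r·G((1−α)λσ) − 2∫_r^R G((1−α)λσφ(ρ))√(1+(σφ'(ρ))²) dρ, where G : [0,∞) → [0,∞) satisfies 0 ≤ G(t) ≤ t − c₁t² for all t in some interval (0,δ). Then there exists σ₀ > 0 such that E(σ) > 0 for all σ ∈ (0, σ₀). -/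
open Set intervalIntegral

lemma arith19 (a c₁ r b σ K I gA J : ℝ) (ha : 0 < a) (hc₁ : 0 < c₁) (hr : 0 < r)
    (hb : 0 < b) (hσ : 0 < σ) (hK : 0 < K)
    (hgA : gA ≤ a * σ - c₁ * (a * σ) ^ 2)
    (hJ : J ≤ a * σ * I + b * (a * σ ^ 3 * K / 2))
    (hσ2 : σ * (K * b) < 2 * r * c₁ * a) :
    0 < 2 * a * r * σ + 2 * a * σ * I - 2 * r * gA - 2 * J := by
  nlinarith [mul_le_mul_of_nonneg_left hgA (le_of_lt hr),
             mul_lt_mul_of_pos_left hσ2 (by positivity : (0:ℝ) < a * σ ^ 2)]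

set_option maxHeartbeats 1000000 in
theorem stmt_19
    (lam c₁ r R δ : ℝ) (hlam : 1 < lam) (hc₁ : 0 < c₁) (hr : 0 < r) (hrR : r < R)
    (hδ : 0 < δ)
    (α : ℝ) (hα : α ∈ Set.Ioo (1 / lam) 1)
    (φ : ℝ → ℝ) (hφ : ∀ ρ, φ ρ = (ρ - R) ^ 2 / (r - R) ^ 2)
    (G : ℝ → ℝ)
    (hG_cont : ContinuousOn G (Set.Ici 0))
    (hG_nonneg : ∀ t ≥ (0:ℝ), 0 ≤ G t)
    (hG_bound : ∀ t ∈ Set.Ioo (0:ℝ) δ, G t ≤ t - c₁ * t ^ 2)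
    (E : ℝ → ℝ)
    (hE : ∀ σ, E σ =
      2 * (1 - α) * lam * r * σ + 2 * (1 - α) * lam * σ * (∫ ρ in r..R, φ ρ)
        - 2 * r * G ((1 - α) * lam * σ)
        - 2 * ∫ ρ in r..R, G ((1 - α) * lam * σ * φ ρ) * Real.sqrt (1 + (σ * deriv φ ρ) ^ 2)) :
    ∃ σ₀ > (0:ℝ), ∀ σ ∈ Set.Ioo (0:ℝ) σ₀, 0 < E σ := by
  obtain ⟨hα1, hα2⟩ := hα
  have hlam0 : (0:ℝ) < lam := lt_trans one_pos hlam
  have h1α : (0:ℝ) < 1 - α := by linarith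
  have ha : (0:ℝ) < (1 - α) * lam := mul_pos h1α hlam0
  have hb : (0:ℝ) < R - r := by linarith
  have hrRne : r - R ≠ 0 := sub_ne_zero.2 (ne_of_lt hrR)
  have hRrne : R - r ≠ 0 := sub_ne_zero.2 (ne_of_gt hrR)
  have hrR2 : (0:ℝ) < (r - R) ^ 2 := by positivity
  have hK : (0:ℝ) < 4 / (R - r) ^ 2 := by positivity
  -- G 0 = 0
  have hG0 : G 0 = 0 := by
    refine le_antisymm ?_ (hG_nonneg 0 le_rfl)
    have h1 : Filter.Tendsto G (nhdsWithin 0 (Ioi 0)) (nhds (G 0)) :=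
      (hG_cont 0 Set.self_mem_Ici).mono Ioi_subset_Ici_self
    have h2 : Filter.Tendsto (fun t : ℝ => t - c₁ * t ^ 2) (nhdsWithin 0 (Ioi 0)) (nhds 0) := by
      have hc : Continuous fun t : ℝ => t - c₁ * t ^ 2 := by continuity
      have h' := (hc.tendsto 0).mono_left (nhdsWithin_le_nhds (s := Ioi (0:ℝ)))
      simpa using h'
    have hev : ∀ᶠ t in nhdsWithin (0:ℝ) (Ioi 0), G t ≤ t - c₁ * t ^ 2 := by
      filter_upwards [Ioo_mem_nhdsGT_of_mem (by exact ⟨le_rfl, hδ⟩ : (0:ℝ) ∈ Ico 0 δ)] with t ht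
      exact hG_bound t ht
    exact le_of_tendsto_of_tendsto h1 h2 hev
  -- φ facts
  have hφfun : φ = fun ρ => (ρ - R) ^ 2 / (r - R) ^ 2 := funext hφ
  have hφcont : Continuous φ := by
    rw [hφfun]; continuity
  have hderiv : ∀ ρ, deriv φ ρ = 2 * (ρ - R) / (r - R) ^ 2 := by
    intro ρ
    rw [hφfun]
    have h : HasDerivAt (fun ρ : ℝ => (ρ - R) ^ 2) (2 * (ρ - R)) ρ := by
      have := ((hasDerivAt_id ρ).sub_const R).pow 2
      simpa [Pi.pow_def] using this
    rw [deriv_div_const, h.deriv]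
  have hdcont : Continuous (deriv φ) := by
    have : deriv φ = fun ρ => 2 * (ρ - R) / (r - R) ^ 2 := funext hderiv
    rw [this]; continuity
  have hφnn : ∀ ρ, 0 ≤ φ ρ := fun ρ => by rw [hφ]; positivity
  have hφle1 : ∀ ρ ∈ Icc r R, φ ρ ≤ 1 := by
    intro ρ hρ
    rw [hφ, div_le_one hrR2]
    nlinarith [hρ.1, hρ.2]
  have hd2 : ∀ ρ ∈ Icc r R, (deriv φ ρ) ^ 2 ≤ 4 / (R - r) ^ 2 := by
    intro ρ hρ
    have hsq : (ρ - R) ^ 2 ≤ (R - r) ^ 2 := by nlinarith [hρ.1, hρ.2]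
    rw [hderiv ρ, div_pow, div_le_div_iff₀ (by positivity) (by positivity)]
    nlinarith [mul_le_mul_of_nonneg_right hsq (sq_nonneg (R - r)), sq_nonneg (R - r)]
  -- choose σ₀
  refine ⟨min (δ / ((1 - α) * lam)) (2 * r * c₁ * ((1 - α) * lam) / ((4 / (R - r) ^ 2) * (R - r))),
    lt_min (div_pos hδ ha) (div_pos (mul_pos (mul_pos (mul_pos two_pos hr) hc₁) ha) (mul_pos hK hb)), ?_⟩
  rintro σ ⟨hσ0, hσ1⟩
  have hσδ : σ < δ / ((1 - α) * lam) := lt_of_lt_of_le hσ1 (min_le_left _ _)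
  have hσ2' : σ < 2 * r * c₁ * ((1 - α) * lam) / ((4 / (R - r) ^ 2) * (R - r)) :=
    lt_of_lt_of_le hσ1 (min_le_right _ _)
  have haσδ : (1 - α) * lam * σ < δ := by
    have := (lt_div_iff₀ ha).mp hσδ
    linarith [this]
  have haσ : (0:ℝ) < (1 - α) * lam * σ := mul_pos ha hσ0
  have hσ2 : σ * ((4 / (R - r) ^ 2) * (R - r)) < 2 * r * c₁ * ((1 - α) * lam) :=
    (lt_div_iff₀ (mul_pos hK hb)).mp hσ2'
  -- integrability
  have hca : (0:ℝ) ≤ (1 - α) * lam * σ := le_of_lt haσ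
  have hint1 : IntervalIntegrable
      (fun ρ => G ((1 - α) * lam * σ * φ ρ) * Real.sqrt (1 + (σ * deriv φ ρ) ^ 2))
      MeasureTheory.volume r R := by
    apply ContinuousOn.intervalIntegrable
    apply ContinuousOn.mul
    · exact hG_cont.comp (continuous_const.mul hφcont).continuousOn
        (fun x _ => mem_Ici.mpr (mul_nonneg hca (hφnn x)))
    · exact (Real.continuous_sqrt.comp
        (continuous_const.add ((continuous_const.mul hdcont).pow 2))).continuousOn
  have hint2 : IntervalIntegrable
      (fun ρ => (1 - α) * lam * σ * φ ρ + (1 - α) * lam * σ ^ 3 * (4 / (R - r) ^ 2) / 2)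
      MeasureTheory.volume r R :=
    ((continuous_const.mul hφcont).add continuous_const).intervalIntegrable r R
  -- pointwise bound
  have hpt : ∀ ρ ∈ Icc r R,
      G ((1 - α) * lam * σ * φ ρ) * Real.sqrt (1 + (σ * deriv φ ρ) ^ 2) ≤
      (1 - α) * lam * σ * φ ρ + (1 - α) * lam * σ ^ 3 * (4 / (R - r) ^ 2) / 2 := by
    intro ρ hρ
    have h0t : 0 ≤ (1 - α) * lam * σ * φ ρ := mul_nonneg hca (hφnn ρ)
    have htle : (1 - α) * lam * σ * φ ρ ≤ (1 - α) * lam * σ :=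
      mul_le_of_le_one_right hca (hφle1 ρ hρ)
    have hGt : G ((1 - α) * lam * σ * φ ρ) ≤ (1 - α) * lam * σ * φ ρ := by
      rcases eq_or_lt_of_le h0t with h | h
      · rw [← h, hG0]
      · have hb' := hG_bound _ ⟨h, lt_of_le_of_lt htle haσδ⟩
        have hq : (0:ℝ) ≤ c₁ * ((1 - α) * lam * σ * φ ρ) ^ 2 := by positivity
        linarith
    have hs : Real.sqrt (1 + (σ * deriv φ ρ) ^ 2) ≤ 1 + (σ * deriv φ ρ) ^ 2 / 2 := by
      have h1 : Real.sqrt (1 + (σ * deriv φ ρ) ^ 2) ≤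
          Real.sqrt ((1 + (σ * deriv φ ρ) ^ 2 / 2) ^ 2) :=
        Real.sqrt_le_sqrt (by nlinarith [sq_nonneg (σ * deriv φ ρ)])
      rwa [Real.sqrt_sq (by positivity)] at h1
    have hmul : G ((1 - α) * lam * σ * φ ρ) * Real.sqrt (1 + (σ * deriv φ ρ) ^ 2) ≤
        ((1 - α) * lam * σ * φ ρ) * (1 + (σ * deriv φ ρ) ^ 2 / 2) :=
      mul_le_mul hGt hs (Real.sqrt_nonneg _) h0t
    have hx2 : (σ * deriv φ ρ) ^ 2 ≤ σ ^ 2 * (4 / (R - r) ^ 2) := by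
      rw [mul_pow]
      exact mul_le_mul_of_nonneg_left (hd2 ρ hρ) (sq_nonneg σ)
    have h2 : ((1 - α) * lam * σ * φ ρ) * (σ * deriv φ ρ) ^ 2 ≤
        ((1 - α) * lam * σ) * (σ ^ 2 * (4 / (R - r) ^ 2)) :=
      mul_le_mul htle hx2 (sq_nonneg _) hca
    nlinarith [h2]
  -- integral bound
  have hJle : (∫ ρ in r..R, G ((1 - α) * lam * σ * φ ρ) * Real.sqrt (1 + (σ * deriv φ ρ) ^ 2)) ≤
      (1 - α) * lam * σ * (∫ ρ in r..R, φ ρ) +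
        (R - r) * ((1 - α) * lam * σ ^ 3 * (4 / (R - r) ^ 2) / 2) := by
    have h := intervalIntegral.integral_mono_on (le_of_lt hrR) hint1 hint2 hpt
    have hcalc : (∫ ρ in r..R,
        ((1 - α) * lam * σ * φ ρ + (1 - α) * lam * σ ^ 3 * (4 / (R - r) ^ 2) / 2)) =
        (1 - α) * lam * σ * (∫ ρ in r..R, φ ρ) +
          (R - r) * ((1 - α) * lam * σ ^ 3 * (4 / (R - r) ^ 2) / 2) := by
      rw [intervalIntegral.integral_add (f := fun ρ => (1 - α) * lam * σ * φ ρ)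
          (((continuous_const.mul hφcont)).intervalIntegrable r R)
          (intervalIntegrable_const),
        intervalIntegral.integral_const_mul, intervalIntegral.integral_const, smul_eq_mul]
    rw [hcalc] at h
    exact h
  have hgA : G ((1 - α) * lam * σ) ≤
      (1 - α) * lam * σ - c₁ * ((1 - α) * lam * σ) ^ 2 := hG_bound _ ⟨haσ, haσδ⟩
  have key := arith19 ((1 - α) * lam) c₁ r (R - r) σ (4 / (R - r) ^ 2)
    (∫ ρ in r..R, φ ρ) (G ((1 - α) * lam * σ))
    (∫ ρ in r..R, G ((1 - α) * lam * σ * φ ρ) * Real.sqrt (1 + (σ * deriv φ ρ) ^ 2))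
    ha hc₁ hr hb hσ0 hK hgA hJle hσ2
  rw [hE σ]
  linarith [key]
end
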